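/- Let D be a directed network on node set N. Every middleman has strictly positive middleman power: for every i ∈ M(D), ν_i(D) > 0 (equivalently, its brokerage b_i(D) ≥ 1). -/

import Mathlib

open Finset

variable {V : Type*} [Fintype V] [DecidableEq V]

/-- The arc set is irreflexive: no loops. -/
def IrreflArcs (D : Finset (V × V)) : Prop := ∀ i : V, (i, i) ∉ D

/-- `l` is an `(i,j)`-path in `D`: a list of pairwise distinct nodes, of length at
least 2, starting at `i`, ending at `j`, consecutive nodes joined by arcs of `D`. -/
def IsPath (D : Finset (V × V)) (i j : V) (l : List V) : Prop :=
  l.Nodup ∧ l.Chain' (fun a b => (a, b) ∈ D) ∧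
    l.head? = some i ∧ l.getLast? = some j ∧ 2 ≤ l.length

/-- Node `i` is connected to node `j`: there is at least one `(i,j)`-path. -/
def Conn (D : Finset (V × V)) (i j : V) : Prop := ∃ l : List V, IsPath D i j l

/-- The direct successors `s_i(D)`. -/
def dsucc (D : Finset (V × V)) (i : V) : Finset V := univ.filter fun j => (i, j) ∈ D

/-- The direct predecessors `p_i(D)`. -/
def dpred (D : Finset (V × V)) (i : V) : Finset V := univ.filter fun j => (j, i) ∈ D

open scoped Classical in
/-- The successor set `S_i(D)`: all nodes to which `i` is connected. -/
noncomputable def succC (D : Finset (V × V)) (i : V) : Finset V :=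
  univ.filter fun j => Conn D i j

open scoped Classical in
/-- The predecessor set `P_i(D)`: all nodes that are connected to `i`. -/
noncomputable def predC (D : Finset (V × V)) (i : V) : Finset V :=
  univ.filter fun j => Conn D j i

/-- An intermediary: at least one direct predecessor, at least one direct successor,
and at least two distinct direct neighbours. -/
def Intermediary (D : Finset (V × V)) (i : V) : Prop :=
  (dpred D i).Nonempty ∧ (dsucc D i).Nonempty ∧ 2 ≤ (dsucc D i ∪ dpred D i).card

/-- The induced subnetwork `D_M` on a node set `M`. -/
def inducedOn (D : Finset (V × V)) (M : Finset V) : Finset (V × V) :=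
  D.filter fun e => e.1 ∈ M ∧ e.2 ∈ M

/-- The reduced network `D − i`. -/
def removeNode (D : Finset (V × V)) (i : V) : Finset (V × V) :=
  D.filter fun e => e.1 ≠ i ∧ e.2 ≠ i

/-- The reduced network `D − C`, removing a node set `C`. -/
def removeNodes (D : Finset (V × V)) (C : Finset V) : Finset (V × V) :=
  D.filter fun e => e.1 ∉ C ∧ e.2 ∉ C

/-- `h` is an `(i,j)`-middleman: `i ≠ j`, `h ∉ {i,j}`, there is at least one
`(i,j)`-path, and `h` lies on every `(i,j)`-path. -/
def MmBetween (D : Finset (V × V)) (h i j : V) : Prop :=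
  i ≠ j ∧ h ≠ i ∧ h ≠ j ∧ Conn D i j ∧ ∀ l : List V, IsPath D i j l → h ∈ l

/-- `h` is a middleman: an intermediary that is an `(i,j)`-middleman for some pair. -/
def IsMiddleman (D : Finset (V × V)) (h : V) : Prop :=
  Intermediary D h ∧ ∃ i j : V, MmBetween D h i j

/-- The network is weakly connected. -/
def WeakConn (D : Finset (V × V)) : Prop :=
  ∀ i j : V, i ≠ j → Conn D i j ∨ Conn D j i

/-- The network `(M, D_M)` is weakly connected. -/
def WeakConnOn (D : Finset (V × V)) (M : Finset V) : Prop :=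
  ∀ i ∈ M, ∀ j ∈ M, i ≠ j → Conn (inducedOn D M) i j ∨ Conn (inducedOn D M) j i

/-- The network is strongly connected. -/
def StrongConn (D : Finset (V × V)) : Prop :=
  ∀ i j : V, i ≠ j → Conn D i j

/-- `M` is a component of `D`. -/
def IsComponent (D : Finset (V × V)) (M : Finset V) : Prop :=
  WeakConnOn D M ∧ ∀ i ∉ M, ¬ WeakConnOn D (insert i M)

/-- The coverage `Γ_i(D)` of an intermediary `i`. -/
noncomputable def coverage (D : Finset (V × V)) (i : V) : Finset (V × V) :=
  (predC D i ×ˢ succC D i).filter fun e => e.1 ≠ e.2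

/-- The extended coverage `Γ̄_j(D)` of a node `j`. -/
noncomputable def extCoverage (D : Finset (V × V)) (j : V) : Finset (V × V) :=
  insert j (predC D j) ×ˢ insert j (succC D j)

/-- Intermediary `i` is contested by the node set `C ⊆ N \ {i}`. -/
def ContestedBy (D : Finset (V × V)) (i : V) (C : Finset V) : Prop :=
  i ∉ C ∧ coverage D i ⊆ C.biUnion fun j => extCoverage (removeNode D i) j

/-- The brokerage `b_i(D)`. -/
noncomputable def brokerage (D : Finset (V × V)) (i : V) : ℤ :=
  (∑ j ∈ univ.erase i,
      (((succC D j).card : ℤ) - ((succC (removeNode D i) j).card : ℤ)))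
    - ((predC D i).card : ℤ)

/-- The maximal potential brokerage `B(D)`. -/
noncomputable def maxBrokerage (D : Finset (V × V)) : ℤ :=
  ∑ i : V, (((succC D i).card : ℤ) - ((dsucc D i).card : ℤ))

/-- The middleman power measure `ν_i(D) = b_i(D) / max{B(D), 1}`. -/
noncomputable def power (D : Finset (V × V)) (i : V) : ℚ :=
  (brokerage D i : ℚ) / ((max (maxBrokerage D) 1 : ℤ) : ℚ)

/-- The robustness `ρ_i(D)` of a middleman `i`. -/
noncomputable def robustness (D : Finset (V × V)) (i : V) : ℕ :=
  sInf {m : ℕ | ∃ D' : Finset (V × V),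
      IrreflArcs D' ∧ D ⊂ D' ∧ ¬ IsMiddleman D' i ∧ D'.card = m} - D.card

/-- The dual robustness `ρ*_i(D)` of a middleman `i`. -/
noncomputable def dualRobustness (D : Finset (V × V)) (i : V) : ℕ :=
  D.card - sSup {m : ℕ | ∃ D' : Finset (V × V),
      D' ⊆ D ∧ ¬ IsMiddleman D' i ∧ D'.card = m}

/-- The node-robustness `ψ_i(D)` of a middleman `i`. -/
noncomputable def nodeRobustness (D : Finset (V × V)) (i : V) : ℕ :=
  sInf {m : ℕ | ∃ C : Finset V,
      i ∉ C ∧ ¬ IsMiddleman (removeNodes D C) i ∧ C.card = m}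

/-- Direct neighbours in the underlying undirected network. -/
def nbr (D : Finset (V × V)) (i : V) : Finset V := dsucc D i ∪ dpred D i

/-- The local clustering coefficient `C_i = 2 L_i / (d_i (d_i − 1))`, computed here as
the number of ordered adjacent pairs of neighbours divided by `d_i (d_i − 1)`. -/
def clustering (D : Finset (V × V)) (i : V) : ℚ :=
  (((nbr D i ×ˢ nbr D i).filter fun e =>
      e.1 ≠ e.2 ∧ ((e.1, e.2) ∈ D ∨ (e.2, e.1) ∈ D)).card : ℚ)
    / (((nbr D i).card : ℚ) * (((nbr D i).card : ℚ) - 1))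

/-! The summand of `b_i(D)` at `j` counts the successors that `j` loses when `i` is removed.
Every predecessor of `i` loses `i` itself, and if `i` separates `q` from `p`, then `p` loses `q`
as well. Hence the sum exceeds `#P_i(D)`. -/

section Paths

variable {V : Type*} {D D' : Finset (V × V)} {i p q x : V} {l : List V}

theorem Conn.mono (h : D ⊆ D') : Conn D p q → Conn D' p q := by
  rintro ⟨l, hnodup, hchain, hends⟩
  exact ⟨l, hnodup, hchain.imp fun _ _ hab => h hab, hends⟩

theorem not_conn_self : ¬ Conn D i i := by
  rintro ⟨l, hnodup, -, hhead, hlast, hlen⟩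
  match l, hnodup, hhead, hlast, hlen with
  | a :: b :: t, hnodup, hhead, hlast, _ =>
    obtain rfl : a = i := by simpa using hhead
    rw [List.getLast?_cons_cons] at hlast
    exact (List.nodup_cons.mp hnodup).1 (List.mem_of_mem_getLast? hlast)

theorem IsPath.not_mem_of_removeNode [DecidableEq V] (hl : IsPath (removeNode D i) p q l) :
    i ∉ l := by
  obtain ⟨-, hchain, -, -, hlen⟩ := hl
  match l, hchain, hlen with
  | a :: b :: t, hchain, _ =>
    have hab : (a, b) ∈ removeNode D i := (List.isChain_cons_cons.mp hchain).1
    exact fun hi => hchain.induction (· ≠ i) _ (fun _ _ hxy _ => (mem_filter.mp hxy).2.2)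
      (fun _ => (mem_filter.mp hab).2.1) i hi rfl

theorem not_conn_removeNode_to [DecidableEq V] : ¬ Conn (removeNode D i) p i := by
  rintro ⟨l, hl⟩
  exact hl.not_mem_of_removeNode (List.mem_of_mem_getLast? hl.2.2.2.1)

theorem IsPath.conn_of_mem (hl : IsPath D p q l) (hx : x ∈ l) (hxp : x ≠ p) : Conn D p x := by
  obtain ⟨hnodup, hchain, hhead, -, -⟩ := hl
  obtain ⟨s, t, rfl⟩ := List.append_of_mem hx
  obtain ⟨a, s, rfl⟩ := List.exists_cons_of_ne_nil (l := s) (by rintro rfl; simp_all)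
  refine ⟨a :: s ++ [x], hnodup.sublist ?_, hchain.prefix ⟨t, by simp⟩, by simpa using hhead,
    List.getLast?_concat .., by simp⟩
  exact (List.singleton_sublist.mpr List.mem_cons_self).append_left _

end Paths

theorem Finset.card_add_one_le_sum {ι : Type*} [DecidableEq ι] {s t : Finset ι} {f : ι → ℕ}
    {p : ι} (hst : s ⊆ t) (hs : ∀ j ∈ s, 1 ≤ f j) (hp : p ∈ s) (hfp : 2 ≤ f p) :
    #s + 1 ≤ ∑ j ∈ t, f j :=
  calc #s + 1 = 2 + #(s.erase p) := by
        rw [card_erase_of_mem hp]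
        have := card_pos.mpr ⟨p, hp⟩
        omega
    _ ≤ f p + ∑ j ∈ s.erase p, f j := by
      gcongr
      rw [card_eq_sum_ones]
      exact sum_le_sum fun j hj => hs j (mem_of_mem_erase hj)
    _ = ∑ j ∈ s, f j := add_sum_erase s f hp
    _ ≤ ∑ j ∈ t, f j := sum_le_sum_of_subset hst

section Brokerage

variable {V : Type*} [Fintype V] {D : Finset (V × V)} {i j p q : V}

theorem mem_succC_iff : j ∈ succC D i ↔ Conn D i j := by
  classical simp [succC]

theorem mem_predC_iff : j ∈ predC D i ↔ Conn D j i := by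
  classical simp [predC]

theorem MmBetween.mem_predC (h : MmBetween D i p q) : p ∈ predC D i := by
  obtain ⟨-, hip, -, ⟨l, hl⟩, hall⟩ := h
  exact mem_predC_iff.mpr (hl.conn_of_mem (hall l hl) hip)

variable [DecidableEq V]

theorem succC_removeNode_subset : succC (removeNode D i) j ⊆ succC D j := fun _ hx =>
  mem_succC_iff.mpr (Conn.mono (filter_subset _ _) (mem_succC_iff.mp hx))

theorem brokerage_eq_sum_card_sdiff (D : Finset (V × V)) (i : V) :
    brokerage D i = ((∑ j ∈ univ.erase i, #(succC D j \ succC (removeNode D i) j) : ℕ) : ℤ)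
      - #(predC D i) := by
  simp only [brokerage, card_sdiff_of_subset succC_removeNode_subset, Nat.cast_sum,
    Nat.cast_sub (card_le_card succC_removeNode_subset)]

theorem mem_succC_sdiff_of_mem_predC (hj : j ∈ predC D i) :
    i ∈ succC D j \ succC (removeNode D i) j :=
  mem_sdiff.mpr ⟨mem_succC_iff.mpr (mem_predC_iff.mp hj),
    fun h => not_conn_removeNode_to (mem_succC_iff.mp h)⟩

theorem MmBetween.mem_succC_sdiff (h : MmBetween D i p q) :
    q ∈ succC D p \ succC (removeNode D i) p := by
  obtain ⟨-, -, -, hpq, hall⟩ := h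
  refine mem_sdiff.mpr ⟨mem_succC_iff.mpr hpq, fun hq => ?_⟩
  obtain ⟨l, hl⟩ := mem_succC_iff.mp hq
  have hlD : IsPath D p q l := ⟨hl.1, hl.2.1.imp fun _ _ h => (mem_filter.mp h).1, hl.2.2⟩
  exact hl.not_mem_of_removeNode (hall l hlD)

theorem one_le_brokerage_of_mmBetween (h : MmBetween D i p q) : 1 ≤ brokerage D i := by
  have hpred_sub : predC D i ⊆ univ.erase i := fun j hj =>
    mem_erase.mpr ⟨fun hji => not_conn_self (mem_predC_iff.mp (hji ▸ hj)), mem_univ j⟩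
  have hiq : i ≠ q := h.2.2.1
  have hsum := card_add_one_le_sum (f := fun j => #(succC D j \ succC (removeNode D i) j))
    hpred_sub (fun j hj => card_pos.mpr ⟨i, mem_succC_sdiff_of_mem_predC hj⟩) h.mem_predC
    (one_lt_card.mpr ⟨i, mem_succC_sdiff_of_mem_predC h.mem_predC, q, h.mem_succC_sdiff, hiq⟩)
  rw [brokerage_eq_sum_card_sdiff]
  omega

theorem power_pos_of_brokerage_pos (h : 0 < brokerage D i) : 0 < power D i :=
  div_pos (by exact_mod_cast h) (by exact_mod_cast lt_max_of_lt_right one_pos)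

end Brokerage

theorem statement13_general {V : Type*} [Fintype V] [DecidableEq V] (D : Finset (V × V))
    (i : V) (hm : IsMiddleman D i) :
    0 < power D i ∧ 1 ≤ brokerage D i := by
  obtain ⟨-, p, q, hpq⟩ := hm
  have hb := one_le_brokerage_of_mmBetween hpq
  exact ⟨power_pos_of_brokerage_pos hb, hb⟩

/-- Every middleman has strictly positive middleman power (equivalently, its
brokerage is at least 1). -/
theorem statement13 {V : Type*} [Fintype V] [DecidableEq V] (D : Finset (V × V))
    (hirr : IrreflArcs D) (i : V) (hm : IsMiddleman D i) :
    0 < power D i ∧ 1 ≤ brokerage D i :=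
  statement13_general D i hm
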